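/- Suppose each f_i is L-smooth and μ-strongly convex, f = (1/m)∑_{i=1}^m f_i with minimizer x*, all clients perform H ≥ 1 local FedLin steps per round with common step size η = 1/(6LH), and there is no compression. Then after T rounds, f(x̄_{T+1}) - f(x*) ≤ (1 - 1/(6κ))^T (f(x̄₁) - f(x*)), where κ = L/μ. -/

import Mathlib

/-!
Each client's corrected local steps drift from the round's starting point `x̄` by at most
`(6/5) ℓ η ‖∇f(x̄)‖` after `ℓ` steps, so by `L`-smoothness every local direction
`∇fᵢ(xᵢ,ℓ) - ∇fᵢ(x̄) + ∇f(x̄)` lies within `‖∇f(x̄)‖/5` of `∇f(x̄)`. Hence a round is an inexact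
gradient step `x̄ ↦ x̄ - ηH (∇f(x̄) + e)` with `‖e‖ ≤ ‖∇f(x̄)‖/5`, which by the descent lemma
decreases `f` by at least `(ηH/2) ‖∇f(x̄)‖²`. Strong convexity gives the Polyak–Łojasiewicz
inequality `‖∇f(x̄)‖² ≥ 2μ (f(x̄) - f(x⋆))`, so each round contracts the optimality gap by the
factor `1 - μηH = 1 - 1/(6κ)`.
-/

open Finset RealInnerProductSpace

open scoped NNReal BigOperators

theorem eq_sub_smul_sum_of_eq_sub_smul {E : Type*} [AddCommGroup E] [Module ℝ E] {y v : ℕ → E}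
    {η : ℝ} {n : ℕ} (hy : ∀ ℓ < n, y (ℓ + 1) = y ℓ - η • v ℓ) :
    y n = y 0 - η • ∑ ℓ ∈ range n, v ℓ := by
  rw [eq_sub_iff_add_eq, ← eq_sub_iff_add_eq', ← sum_range_sub', smul_sum]
  exact sum_congr rfl fun ℓ hℓ => by rw [hy ℓ (mem_range.1 hℓ), sub_sub_cancel]

theorem le_pow_mul_of_le_mul {u : ℕ → ℝ} {c : ℝ} (hu : ∀ n, 0 ≤ u n)
    (h : ∀ n, u (n + 1) ≤ c * u n) (n : ℕ) : u n ≤ c ^ n * u 0 := by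
  rcases le_or_gt 0 c with hc | hc
  · exact le_geom hc n fun k _ => h k
  · have h0 : u 0 = 0 := by nlinarith [h 0, hu 1, hu 0]
    cases n with
    | zero => simp [h0]
    | succ n => rw [h0, mul_zero]; nlinarith [h n, hu n]

section NormedSpace

variable {E : Type*} [NormedAddCommGroup E] [NormedSpace ℝ E]

theorem norm_one_div_smul_sum_sub_le {m : ℕ} (hm : 0 < m) {a : Fin m → E} {c : E} {r : ℝ}
    (h : ∀ i, ‖a i - c‖ ≤ r) : ‖(1 / (m : ℝ)) • ∑ i, a i - c‖ ≤ r := by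
  have hmem := (convex_closedBall c r).sum_mem (t := (univ : Finset (Fin m)))
    (w := fun _ => 1 / (m : ℝ)) (fun _ _ => by positivity) (by simp [hm.ne'])
    (fun i _ => by simpa [dist_eq_norm] using h i)
  rwa [← smul_sum, Metric.mem_closedBall, dist_eq_norm] at hmem

variable {G : E → E} {K : ℝ≥0} {η : ℝ} {H : ℕ} {x₀ g : E} {y : ℕ → E}

theorem norm_fedLin_iterate_sub_le (hG : LipschitzWith K G) (hη : 0 ≤ η)
    (hηKH : η * K * H ≤ 1 / 6) (hy0 : y 0 = x₀)
    (hy : ∀ ℓ < H, y (ℓ + 1) = y ℓ - η • (G (y ℓ) - G x₀ + g)) :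
    ∀ ℓ ≤ H, ‖y ℓ - x₀‖ ≤ 6 / 5 * (ℓ * η) * ‖g‖ := by
  intro ℓ hℓ
  induction ℓ with
  | zero => simp [hy0]
  | succ ℓ ih =>
    have hℓH : ℓ < H := hℓ
    have hηKℓ : η * K * ℓ ≤ 1 / 6 :=
      le_trans (mul_le_mul_of_nonneg_left (by exact_mod_cast hℓH.le) (by positivity)) hηKH
    rw [hy ℓ hℓH, sub_right_comm]
    refine (norm_sub_le _ _).trans ?_
    rw [norm_smul, Real.norm_of_nonneg hη]
    set r := ‖y ℓ - x₀‖
    have hr := ih hℓH.le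
    calc r + η * ‖G (y ℓ) - G x₀ + g‖ ≤ r + η * (K * r + ‖g‖) := by
          gcongr; exact (norm_add_le _ _).trans (by gcongr; exact hG.norm_sub_le _ _)
      _ = r + η * K * r + η * ‖g‖ := by ring
      _ ≤ 6 / 5 * (ℓ * η) * ‖g‖ + η * K * (6 / 5 * (ℓ * η) * ‖g‖) + η * ‖g‖ := by gcongr
      _ = 6 / 5 * (ℓ * η) * ‖g‖ + 6 / 5 * (η * K * ℓ) * (η * ‖g‖) + η * ‖g‖ := by ring
      _ ≤ 6 / 5 * (ℓ * η) * ‖g‖ + 6 / 5 * (1 / 6) * (η * ‖g‖) + η * ‖g‖ := by gcongr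
      _ = 6 / 5 * ((ℓ + 1 : ℕ) * η) * ‖g‖ := by push_cast; ring

theorem norm_fedLin_iterate_sub_gradient_step_le (hG : LipschitzWith K G) (hη : 0 ≤ η)
    (hηKH : η * K * H ≤ 1 / 6) (hy0 : y 0 = x₀)
    (hy : ∀ ℓ < H, y (ℓ + 1) = y ℓ - η • (G (y ℓ) - G x₀ + g)) :
    ‖y H - (x₀ - (η * H) • g)‖ ≤ η * H / 5 * ‖g‖ := by
  have hdev : ∀ ℓ ∈ range H, ‖G (y ℓ) - G x₀‖ ≤ ‖g‖ / 5 := by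
    intro ℓ hℓ
    have hℓH := (mem_range.1 hℓ).le
    have hηKℓ : η * K * ℓ ≤ 1 / 6 :=
      le_trans (mul_le_mul_of_nonneg_left (by exact_mod_cast hℓH) (by positivity)) hηKH
    calc ‖G (y ℓ) - G x₀‖ ≤ K * (6 / 5 * (ℓ * η) * ‖g‖) :=
          (hG.norm_sub_le _ _).trans
            (by gcongr; exact norm_fedLin_iterate_sub_le hG hη hηKH hy0 hy ℓ hℓH)
      _ = 6 / 5 * (η * K * ℓ) * ‖g‖ := by ring
      _ ≤ 6 / 5 * (1 / 6) * ‖g‖ := by gcongr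
      _ = ‖g‖ / 5 := by ring
  have hyH : y H - (x₀ - (η * H) • g) = -(η • ∑ ℓ ∈ range H, (G (y ℓ) - G x₀)) := by
    rw [eq_sub_smul_sum_of_eq_sub_smul hy, hy0, sum_add_distrib, sum_const, card_range,
      smul_add, mul_smul, Nat.cast_smul_eq_nsmul]
    abel
  rw [hyH, norm_neg, norm_smul, Real.norm_of_nonneg hη]
  calc η * ‖∑ ℓ ∈ range H, (G (y ℓ) - G x₀)‖ ≤ η * ∑ ℓ ∈ range H, ‖g‖ / 5 := by
        gcongr; exact (norm_sum_le _ _).trans (sum_le_sum hdev)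
    _ = η * H / 5 * ‖g‖ := by rw [sum_const, card_range, nsmul_eq_mul]; ring

end NormedSpace

section InnerProductSpace

variable {E : Type*} [NormedAddCommGroup E] [InnerProductSpace ℝ E] [CompleteSpace E]

noncomputable def bregman (φ : E → ℝ) (x y : E) : ℝ := φ y - φ x - ⟪y - x, gradient φ x⟫

theorem bregman_le_of_lipschitzWith_gradient {φ : E → ℝ} (hφ : Differentiable ℝ φ) {K : ℝ≥0}
    (hK : LipschitzWith K (gradient φ)) (x y : E) :
    bregman φ x y ≤ K / 2 * ‖y - x‖ ^ 2 := by
  set v := y - x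
  set ψ : ℝ → ℝ := fun s => φ (x + s • v) - s * ⟪v, gradient φ x⟫ - K / 2 * s ^ 2 * ‖v‖ ^ 2
  have hψ : ∀ s, HasDerivAt ψ
      (⟪v, gradient φ (x + s • v)⟫ - ⟪v, gradient φ x⟫ - K * s * ‖v‖ ^ 2) s := by
    intro s
    have hline : HasDerivAt (fun s : ℝ => x + s • v) v s := by
      simpa using ((hasDerivAt_id s).smul_const v).const_add x
    have hφs := ((hφ _).hasGradientAt.hasFDerivAt).comp_hasDerivAt s hline
    rw [InnerProductSpace.toDual_apply_apply, real_inner_comm] at hφs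
    refine ((hφs.sub ((hasDerivAt_id s).mul_const ⟪v, gradient φ x⟫)).sub
      (((hasDerivAt_pow 2 s).const_mul (K / 2 : ℝ)).mul_const (‖v‖ ^ 2))).congr_deriv ?_
    simp only [Nat.cast_ofNat]
    ring
  have hanti : AntitoneOn ψ (Set.Ici 0) := by
    refine antitoneOn_of_hasDerivWithinAt_nonpos (convex_Ici 0)
      (fun s _ => (hψ s).continuousAt.continuousWithinAt) (fun s _ => (hψ s).hasDerivWithinAt) ?_
    intro s hs
    rw [interior_Ici, Set.mem_Ioi] at hs
    have hlip : ‖gradient φ (x + s • v) - gradient φ x‖ ≤ K * (s * ‖v‖) := by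
      simpa [norm_smul, abs_of_pos hs] using hK.norm_sub_le (x + s • v) x
    have := (real_inner_le_norm v _).trans (mul_le_mul_of_nonneg_left hlip (norm_nonneg v))
    rw [inner_sub_right] at this
    nlinarith
  have := hanti (Set.mem_Ici.2 le_rfl) (Set.mem_Ici.2 zero_le_one) zero_le_one
  simp only [ψ, one_smul, zero_smul, add_zero, v, add_sub_cancel, one_mul, zero_mul, one_pow,
    sub_zero, ne_eq, OfNat.ofNat_ne_zero, not_false_eq_true, zero_pow, mul_zero] at this
  unfold bregman
  linarith

theorem hasGradientAt_const_mul_sum {ι : Type*} [Fintype ι] {f : ι → E → ℝ} {x : E}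
    (hf : ∀ i, DifferentiableAt ℝ (f i) x) (c : ℝ) :
    HasGradientAt (fun z => c * ∑ i, f i z) (c • ∑ i, gradient (f i) x) x := by
  rw [hasGradientAt_iff_hasFDerivAt, map_smul, map_sum]
  exact (HasFDerivAt.fun_sum fun i _ => (hf i).hasGradientAt.hasFDerivAt).const_mul c

theorem bregman_average {m : ℕ} {f : Fin m → E → ℝ} {F : E → ℝ}
    (hF : ∀ z, F z = 1 / (m : ℝ) * ∑ i, f i z) (hf : ∀ i, Differentiable ℝ (f i)) (x y : E) :
    bregman F x y = 𝔼 i, bregman (f i) x y := by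
  have hgrad : gradient F x = (1 / (m : ℝ)) • ∑ i, gradient (f i) x := by
    rw [show F = _ from funext hF]
    exact (hasGradientAt_const_mul_sum (fun i => hf i x) _).gradient
  simp only [bregman, hgrad, Fintype.expect_eq_sum_div_card, Fintype.card_fin, hF,
    real_inner_smul_right, inner_sum, sum_sub_distrib]
  ring

theorem mul_sub_le_sq_norm_gradient_of_le_bregman {φ : E → ℝ} {x y : E} {μ : ℝ} (hμ : 0 < μ)
    (h : μ / 2 * ‖y - x‖ ^ 2 ≤ bregman φ x y) :
    2 * μ * (φ x - φ y) ≤ ‖gradient φ x‖ ^ 2 := by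
  have hinner := neg_le_of_abs_le (abs_real_inner_le_norm (y - x) (gradient φ x))
  rw [bregman] at h
  -- minimise the quadratic `μ/2 r² - ‖g‖ r` over `r = ‖y - x‖`
  nlinarith [sq_nonneg (‖gradient φ x‖ - μ * ‖y - x‖)]

theorem le_sub_of_inexact_gradient_step {φ : E → ℝ} {x x' : E} {L s : ℝ} (hL : 0 ≤ L)
    (hs : 0 ≤ s) (hsL : s * L ≤ 1 / 6) (hφ : bregman φ x x' ≤ L / 2 * ‖x' - x‖ ^ 2)
    (hstep : ‖x' - (x - s • gradient φ x)‖ ≤ s / 5 * ‖gradient φ x‖) :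
    φ x' ≤ φ x - s / 2 * ‖gradient φ x‖ ^ 2 := by
  set g := gradient φ x
  set e := x' - (x - s • g)
  have hx' : x' - x = e - s • g := by simp only [e]; abel
  have hinner : ⟪x' - x, g⟫ ≤ -(4 / 5) * s * ‖g‖ ^ 2 := by
    rw [hx', inner_sub_left, real_inner_smul_left, real_inner_self_eq_norm_sq]
    nlinarith [real_inner_le_norm e g, norm_nonneg g]
  have hnorm : ‖x' - x‖ ≤ 6 / 5 * s * ‖g‖ := by
    rw [hx']
    refine (norm_sub_le _ _).trans ?_
    rw [norm_smul, Real.norm_of_nonneg hs]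
    linarith
  have hsq : L / 2 * ‖x' - x‖ ^ 2 ≤ 3 / 25 * s * ‖g‖ ^ 2 :=
    calc L / 2 * ‖x' - x‖ ^ 2 ≤ L / 2 * (6 / 5 * s * ‖g‖) ^ 2 := by gcongr
      _ = 18 / 25 * (s * L) * (s * ‖g‖ ^ 2) := by ring
      _ ≤ 18 / 25 * (1 / 6) * (s * ‖g‖ ^ 2) := by gcongr
      _ = 3 / 25 * s * ‖g‖ ^ 2 := by ring
  rw [bregman] at hφ
  nlinarith [norm_nonneg g]

end InnerProductSpace

/-- Theorem 1 (heterogeneous setting): FedLin with `H` local steps per round and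
common step size `η = 1/(6LH)` converges linearly to the global minimum when each
client objective is `L`-smooth and `μ`-strongly convex. -/
theorem fedlin_linear_convergence_strongly_convex {d m H : ℕ} (hm : 0 < m) (hH : 1 ≤ H)
    (f : Fin m → EuclideanSpace ℝ (Fin d) → ℝ)
    (F : EuclideanSpace ℝ (Fin d) → ℝ)
    (hF : ∀ z, F z = (1 / (m : ℝ)) * ∑ i, f i z)
    (L μ : ℝ) (hL : 0 < L) (hμ : 0 < μ)
    (hdiff : ∀ i, Differentiable ℝ (f i))
    (hsmooth : ∀ i, LipschitzWith L.toNNReal (gradient (f i)))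
    (hstrong : ∀ i, ∀ x y : EuclideanSpace ℝ (Fin d),
      f i y - f i x ≥ ⟪y - x, gradient (f i) x⟫ + μ / 2 * ‖y - x‖ ^ 2)
    (η : ℝ) (hη : η = 1 / (6 * L * H))
    (xbar : ℕ → EuclideanSpace ℝ (Fin d))
    (x : ℕ → Fin m → ℕ → EuclideanSpace ℝ (Fin d))
    (hx0 : ∀ t, 1 ≤ t → ∀ i, x t i 0 = xbar t)
    (hrec : ∀ t, 1 ≤ t → ∀ i, ∀ ℓ < H, x t i (ℓ + 1) =
      x t i ℓ - η • (gradient (f i) (x t i ℓ) - gradient (f i) (xbar t)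
        + gradient F (xbar t)))
    (havg : ∀ t, 1 ≤ t → xbar (t + 1) = (1 / (m : ℝ)) • ∑ i, x t i H)
    (xstar : EuclideanSpace ℝ (Fin d)) (hmin : ∀ z, F xstar ≤ F z)
    (T : ℕ) :
    F (xbar (T + 1)) - F xstar ≤
      (1 - 1 / (6 * (L / μ))) ^ T * (F (xbar 1) - F xstar) := by
  have hLK : (L.toNNReal : ℝ) = L := Real.coe_toNNReal L hL.le
  have hη0 : 0 ≤ η := by rw [hη]; positivity
  have hηHL : η * H * L = 1 / 6 := by
    rw [hη]; field_simp [(by positivity : (H : ℝ) ≠ 0)]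
  have hupper : ∀ y z, bregman F y z ≤ L / 2 * ‖z - y‖ ^ 2 := fun y z => by
    rw [bregman_average hF hdiff]
    refine expect_le ⟨⟨0, hm⟩, mem_univ _⟩ fun i _ => ?_
    simpa [hLK] using bregman_le_of_lipschitzWith_gradient (hdiff i) (hsmooth i) y z
  have hlower : ∀ y z, μ / 2 * ‖z - y‖ ^ 2 ≤ bregman F y z := fun y z => by
    rw [bregman_average hF hdiff]
    exact le_expect ⟨⟨0, hm⟩, mem_univ _⟩ fun i _ => by rw [bregman]; linarith [hstrong i y z]
  have hround : ∀ t, 1 ≤ t → ‖xbar (t + 1) - (xbar t - (η * H) • gradient F (xbar t))‖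
      ≤ η * H / 5 * ‖gradient F (xbar t)‖ := fun t ht => by
    rw [havg t ht]
    refine norm_one_div_smul_sum_sub_le hm fun i => ?_
    exact norm_fedLin_iterate_sub_gradient_step_le (hsmooth i) hη0 (by rw [hLK]; linarith)
      (hx0 t ht i) (hrec t ht i)
  have hcontract : ∀ t, 1 ≤ t → F (xbar (t + 1)) - F xstar
      ≤ (1 - 1 / (6 * (L / μ))) * (F (xbar t) - F xstar) := fun t ht => by
    have hdesc := le_sub_of_inexact_gradient_step hL.le (by positivity) hηHL.le
      (hupper _ _) (hround t ht)
    have hPL := mul_sub_le_sq_norm_gradient_of_le_bregman hμ (hlower (xbar t) xstar)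
    have hrate : 1 / (6 * (L / μ)) = μ * (η * H) := by
      rw [hη]; field_simp
    rw [hrate]
    linarith [mul_le_mul_of_nonneg_left hPL (by positivity : 0 ≤ η * H / 2)]
  exact le_pow_mul_of_le_mul (u := fun t => F (xbar (t + 1)) - F xstar)
    (fun t => sub_nonneg.2 (hmin _)) (fun t => hcontract (t + 1) (by omega)) T
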